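/- Let $\gamma \in [0,1]$. Every $H$-eigenvalue $\lambda$ of $\mathcal{A} \in \mathbb{C}^{[m\times n]}$ lies in $\bigcup_i \mathcal{W}_i(\mathcal{A})$, where $\mathcal{W}_i(\mathcal{A}) = \{z : |z - a_{i\cdots i}| - s_{ii}(\mathcal{A}) \le \gamma P_i(A) + (1-\gamma) Q_i(A)\}$ ($\gamma$-diagonal-dominance inclusion set). -/

import Mathlib

open Finset

noncomputable def tDiag {n k : ℕ} (A : Fin n → (Fin k → Fin n) → ℂ) (i : Fin n) : ℝ :=
  ‖A i (fun _ => i)‖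

noncomputable def tRow {n k : ℕ} (A : Fin n → (Fin k → Fin n) → ℂ) (i : Fin n) : ℝ :=
  ∑ α ∈ univ.filter (fun α : Fin k → Fin n => α ≠ fun _ => i), ‖A i α‖

noncomputable def tS {n k : ℕ} (A : Fin n → (Fin k → Fin n) → ℂ) (i j : Fin n) : ℝ :=
  (1 / (k : ℝ)) * ∑ t : Fin k,
    ∑ α ∈ univ.filter (fun α : Fin k → Fin n => α t = j ∧ α ≠ fun _ => i),
      ‖A i α‖

noncomputable def tP {n k : ℕ} (A : Fin n → (Fin k → Fin n) → ℂ) (i : Fin n) : ℝ :=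
  ∑ j ∈ univ.erase i, tS A i j

noncomputable def tQ {n k : ℕ} (A : Fin n → (Fin k → Fin n) → ℂ) (i : Fin n) : ℝ :=
  ∑ j ∈ univ.erase i, tS A j i

def IsHTensor {n k : ℕ} (A : Fin n → (Fin k → Fin n) → ℂ) : Prop :=
  ∃ y : Fin n → ℝ, (∀ i, 0 < y i) ∧ ∀ i,
    (∑ α ∈ univ.filter (fun α : Fin k → Fin n => α ≠ fun _ => i),
        ‖A i α‖ * ∏ t, y (α t)) < tDiag A i * y i ^ k

def IsHEig {n k : ℕ} (A : Fin n → (Fin k → Fin n) → ℂ) (lam : ℝ) : Prop :=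
  ∃ x : Fin n → ℝ, x ≠ 0 ∧ ∀ i,
    (∑ α : Fin k → Fin n, A i α * ∏ t, (x (α t) : ℂ)) = (lam : ℂ) * (x i : ℂ) ^ k

/-!
With `y i = |x i| ^ k`, the eigenvalue equation and AM-GM for `∏ t, |x (α t)|` give
`(|λ - a_{i…i}| - s_ii) y_i ≤ ∑_{j ≠ i} s_ij y_j` for every `i`. For `γ < 1` put
`z_i = y_i ^ (1 / (1 - γ))`: multiplying the `i`-th inequality by `z_i ^ γ` and using
`z_i ^ γ z_j ^ (1 - γ) ≤ γ z_i + (1 - γ) z_j` bounds its left side by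
`γ P_i z_i + (1 - γ) ∑_{j ≠ i} s_ij z_j`, and summing over `i` turns the last sums into
`∑_i Q_i z_i`.
Since `z ≥ 0` is nonzero, `|λ - a_{i…i}| - s_ii ≤ γ P_i + (1 - γ) Q_i` for some `i`.
For `γ = 1` take `i` where `y` is maximal.
-/

theorem prod_le_sum_pow_card_div_card {ι : Type*} [Fintype ι] [Nonempty ι] (f : ι → ℝ)
    (hf : ∀ i, 0 ≤ f i) :
    ∏ i, f i ≤ (∑ i, f i ^ Fintype.card ι) / Fintype.card ι := by
  have hm : Fintype.card ι ≠ 0 := Fintype.card_ne_zero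
  calc ∏ i, f i = ∏ i, (f i ^ Fintype.card ι) ^ (Fintype.card ι : ℝ)⁻¹ :=
        prod_congr rfl fun i _ => (Real.pow_rpow_inv_natCast (hf i) hm).symm
    _ ≤ ∑ i, (Fintype.card ι : ℝ)⁻¹ * f i ^ Fintype.card ι :=
        Real.geom_mean_le_arith_mean_weighted univ _ _ (fun _ _ => by positivity)
          (by simp [hm]) (fun i _ => pow_nonneg (hf i) _)
    _ = (∑ i, f i ^ Fintype.card ι) / Fintype.card ι := by rw [← mul_sum, inv_mul_eq_div]

theorem sum_sum_erase_comm {ι M : Type*} [Fintype ι] [DecidableEq ι] [AddCommMonoid M]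
    (f : ι → ι → M) :
    ∑ i, ∑ j ∈ univ.erase i, f i j = ∑ j, ∑ i ∈ univ.erase j, f i j :=
  sum_comm' fun i j => by simp [ne_comm]

theorem exists_le_of_sum_mul_le {ι : Type*} [Fintype ι] {c d z : ι → ℝ} (hz : ∀ i, 0 ≤ z i)
    (hz₀ : z ≠ 0) (h : ∑ i, c i * z i ≤ ∑ i, d i * z i) : ∃ i, c i ≤ d i := by
  by_contra! hlt
  obtain ⟨i₀, hi₀⟩ := Function.ne_iff.mp hz₀
  have : ∑ i, d i * z i < ∑ i, c i * z i :=
    sum_lt_sum (fun i _ => mul_le_mul_of_nonneg_right (hlt i).le (hz i))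
      ⟨i₀, mem_univ _, mul_lt_mul_of_pos_right (hlt i₀) ((hz i₀).lt_of_ne' hi₀)⟩
  linarith

section OffDiagonal

variable {ι : Type*} [Fintype ι] [DecidableEq ι] {s : ι → ι → ℝ} {c : ι → ℝ}

theorem exists_le_sum_erase_of_mul_le (hs : ∀ i j, 0 ≤ s i j) {y : ι → ℝ}
    (hy : ∀ i, 0 ≤ y i) (hy₀ : y ≠ 0) (hc : ∀ i, c i * y i ≤ ∑ j ∈ univ.erase i, s i j * y j) :
    ∃ i, c i ≤ ∑ j ∈ univ.erase i, s i j := by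
  obtain ⟨i₀, hi₀⟩ := Function.ne_iff.mp hy₀
  obtain ⟨m, -, hm⟩ := exists_max_image univ y ⟨i₀, mem_univ _⟩
  have hym : 0 < y m := ((hy i₀).lt_of_ne' hi₀).trans_le (hm i₀ (mem_univ _))
  refine ⟨m, le_of_mul_le_mul_right ?_ hym⟩
  calc c m * y m ≤ ∑ j ∈ univ.erase m, s m j * y j := hc m
    _ ≤ ∑ j ∈ univ.erase m, s m j * y m :=
        sum_le_sum fun j _ => mul_le_mul_of_nonneg_left (hm j (mem_univ _)) (hs m j)
    _ = (∑ j ∈ univ.erase m, s m j) * y m := (sum_mul ..).symm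

variable {z : ι → ℝ} {γ δ : ℝ}

theorem mul_le_weighted_sum_erase (hs : ∀ i j, 0 ≤ s i j) (hz : ∀ i, 0 ≤ z i) (hγ : 0 ≤ γ)
    (hδ : 0 ≤ δ) (hγδ : γ + δ = 1) {i : ι}
    (hc : c i * z i ^ δ ≤ ∑ j ∈ univ.erase i, s i j * z j ^ δ) :
    c i * z i ≤ γ * (∑ j ∈ univ.erase i, s i j) * z i + δ * ∑ j ∈ univ.erase i, s i j * z j :=
  calc c i * z i = z i ^ γ * (c i * z i ^ δ) := by
        rw [mul_left_comm, ← Real.rpow_add' (hz i) (by simp [hγδ]), hγδ, Real.rpow_one]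
    _ ≤ z i ^ γ * ∑ j ∈ univ.erase i, s i j * z j ^ δ :=
        mul_le_mul_of_nonneg_left hc (Real.rpow_nonneg (hz i) _)
    _ = ∑ j ∈ univ.erase i, s i j * (z i ^ γ * z j ^ δ) := by
        rw [mul_sum]; exact sum_congr rfl fun j _ => by ring
    _ ≤ ∑ j ∈ univ.erase i, s i j * (γ * z i + δ * z j) :=
        sum_le_sum fun j _ => mul_le_mul_of_nonneg_left
          (Real.geom_mean_le_arith_mean2_weighted hγ hδ (hz i) (hz j) hγδ) (hs i j)
    _ = γ * (∑ j ∈ univ.erase i, s i j) * z i + δ * ∑ j ∈ univ.erase i, s i j * z j := by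
        simp only [mul_add, sum_add_distrib, sum_mul, mul_sum]
        congr 1 <;> exact sum_congr rfl fun j _ => by ring

theorem sum_mul_le_sum_weighted_mul (hs : ∀ i j, 0 ≤ s i j) (hz : ∀ i, 0 ≤ z i) (hγ : 0 ≤ γ)
    (hδ : 0 ≤ δ) (hγδ : γ + δ = 1)
    (hc : ∀ i, c i * z i ^ δ ≤ ∑ j ∈ univ.erase i, s i j * z j ^ δ) :
    ∑ i, c i * z i ≤
      ∑ i, (γ * ∑ j ∈ univ.erase i, s i j + δ * ∑ j ∈ univ.erase i, s j i) * z i :=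
  calc ∑ i, c i * z i
      ≤ ∑ i, (γ * (∑ j ∈ univ.erase i, s i j) * z i +
          δ * ∑ j ∈ univ.erase i, s i j * z j) :=
        sum_le_sum fun i _ => mul_le_weighted_sum_erase hs hz hγ hδ hγδ (hc i)
    _ = _ := by
        rw [sum_add_distrib, ← mul_sum, sum_sum_erase_comm (fun i j => s i j * z j)]
        simp only [add_mul, sum_add_distrib, mul_sum, sum_mul, mul_assoc]

theorem exists_le_weighted_sum_erase (hs : ∀ i j, 0 ≤ s i j) {y : ι → ℝ}
    (hy : ∀ i, 0 ≤ y i) (hy₀ : y ≠ 0) (hc : ∀ i, c i * y i ≤ ∑ j ∈ univ.erase i, s i j * y j)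
    (hγ : γ ∈ Set.Icc (0 : ℝ) 1) :
    ∃ i, c i ≤ γ * ∑ j ∈ univ.erase i, s i j + (1 - γ) * ∑ j ∈ univ.erase i, s j i := by
  obtain ⟨hγ₀, hγ₁⟩ := hγ
  rcases hγ₁.eq_or_lt with rfl | hγ₁
  · simpa using exists_le_sum_erase_of_mul_le hs hy hy₀ hc
  have hδ : 1 - γ ≠ 0 := by linarith
  set z : ι → ℝ := fun i => y i ^ (1 - γ)⁻¹
  have hzy : ∀ i, z i ^ (1 - γ) = y i := fun i => Real.rpow_inv_rpow (hy i) hδ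
  have hz₀ : z ≠ 0 := fun h => hy₀ <| funext fun i => by
    rw [← hzy i, h, Pi.zero_apply, Real.zero_rpow hδ]
  have hcz : ∀ i, c i * z i ^ (1 - γ) ≤ ∑ j ∈ univ.erase i, s i j * z j ^ (1 - γ) := by
    simpa only [hzy] using hc
  have hz : ∀ i, 0 ≤ z i := fun i => Real.rpow_nonneg (hy i) _
  exact exists_le_of_sum_mul_le hz hz₀ <|
    sum_mul_le_sum_weighted_mul hs hz hγ₀ (by linarith) (by ring) hcz

end OffDiagonal

section HEigenvalue

variable {n k : ℕ} (A : Fin n → (Fin k → Fin n) → ℂ)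

theorem tS_nonneg (i j : Fin n) : 0 ≤ tS A i j :=
  mul_nonneg (by positivity) <| sum_nonneg fun _ _ => sum_nonneg fun _ _ => norm_nonneg _

theorem norm_sub_diag_mul_pow_le {lam : ℝ} {x : Fin n → ℝ} {i : Fin n}
    (hx : ∑ α : Fin k → Fin n, A i α * ∏ t, (x (α t) : ℂ) = (lam : ℂ) * (x i : ℂ) ^ k) :
    ‖(lam : ℂ) - A i (fun _ => i)‖ * |x i| ^ k ≤
      ∑ α ∈ univ.filter (fun α : Fin k → Fin n => α ≠ fun _ => i),
        ‖A i α‖ * ∏ t, |x (α t)| := by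
  have hsplit : ((lam : ℂ) - A i (fun _ => i)) * (x i : ℂ) ^ k =
      ∑ α ∈ univ.filter (fun α : Fin k → Fin n => α ≠ fun _ => i),
        A i α * ∏ t, (x (α t) : ℂ) := by
    rw [filter_ne', sub_mul, ← hx, ← add_sum_erase _ _ (mem_univ fun _ => i)]
    simp
  calc ‖(lam : ℂ) - A i (fun _ => i)‖ * |x i| ^ k
      = ‖((lam : ℂ) - A i (fun _ => i)) * (x i : ℂ) ^ k‖ := by simp
    _ ≤ _ := by rw [hsplit]; exact (norm_sum_le _ _).trans_eq (by simp)

theorem sum_norm_mul_mean_eq_sum_tS (i : Fin n) (f : Fin n → ℝ) :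
    ∑ α ∈ univ.filter (fun α : Fin k → Fin n => α ≠ fun _ => i),
        ‖A i α‖ * ((∑ t, f (α t)) / k) = ∑ j, tS A i j * f j := by
  set F := univ.filter (fun α : Fin k → Fin n => α ≠ fun _ => i)
  have hfiber : ∀ t, ∑ α ∈ F, ‖A i α‖ * f (α t) = ∑ j,
      (∑ α ∈ univ.filter (fun α : Fin k → Fin n => α t = j ∧ α ≠ fun _ => i), ‖A i α‖) * f j := by
    intro t
    rw [← sum_fiberwise F (· t)]
    refine sum_congr rfl fun j _ => ?_
    rw [sum_mul, filter_filter]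
    refine sum_congr (filter_congr fun α _ => and_comm) fun α hα => ?_
    rw [(mem_filter.mp hα).2.1]
  calc ∑ α ∈ F, ‖A i α‖ * ((∑ t, f (α t)) / k)
      = 1 / k * ∑ t, ∑ α ∈ F, ‖A i α‖ * f (α t) := by
        rw [sum_comm, mul_sum]
        exact sum_congr rfl fun α _ => by rw [← mul_sum]; ring
    _ = ∑ j, tS A i j * f j := by
        simp only [hfiber, tS, mul_sum, sum_mul, mul_assoc]
        rw [sum_comm]

theorem norm_sub_diag_mul_pow_le_sum_tS (hk : k ≠ 0) {lam : ℝ} {x : Fin n → ℝ} {i : Fin n}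
    (hx : ∑ α : Fin k → Fin n, A i α * ∏ t, (x (α t) : ℂ) = (lam : ℂ) * (x i : ℂ) ^ k) :
    ‖(lam : ℂ) - A i (fun _ => i)‖ * |x i| ^ k ≤ ∑ j, tS A i j * |x j| ^ k := by
  have : NeZero k := ⟨hk⟩
  rw [← sum_norm_mul_mean_eq_sum_tS]
  refine (norm_sub_diag_mul_pow_le A hx).trans <| sum_le_sum fun α _ =>
    mul_le_mul_of_nonneg_left ?_ (norm_nonneg _)
  simpa using prod_le_sum_pow_card_div_card (fun t => |x (α t)|) fun _ => abs_nonneg _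

end HEigenvalue

theorem stmt14_general {n k : ℕ} (hk : 1 ≤ k) (A : Fin n → (Fin k → Fin n) → ℂ)
    (γ : ℝ) (hγ : γ ∈ Set.Icc (0:ℝ) 1) (lam : ℝ) (hlam : IsHEig A lam) :
    ∃ i : Fin n,
      ‖(lam : ℂ) - A i (fun _ => i)‖ - tS A i i ≤
        γ * tP A i + (1 - γ) * tQ A i := by
  obtain ⟨x, hx₀, hx⟩ := hlam
  obtain ⟨i₀, hi₀⟩ := Function.ne_iff.mp hx₀
  have hy₀ : (fun j => |x j| ^ k) ≠ 0 :=
    Function.ne_iff.mpr ⟨i₀, pow_ne_zero _ (abs_ne_zero.mpr hi₀)⟩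
  have hbound : ∀ i, (‖(lam : ℂ) - A i (fun _ => i)‖ - tS A i i) * |x i| ^ k ≤
      ∑ j ∈ univ.erase i, tS A i j * |x j| ^ k := fun i => by
    have := norm_sub_diag_mul_pow_le_sum_tS A (by omega) (hx i)
    rw [← add_sum_erase _ _ (mem_univ i)] at this
    linarith
  exact exists_le_weighted_sum_erase (tS_nonneg A) (fun _ => by positivity) hy₀ hbound hγ

theorem stmt14 {n k : ℕ} (hn : 2 ≤ n) (hk : 1 ≤ k) (A : Fin n → (Fin k → Fin n) → ℂ)
    (γ : ℝ) (hγ : γ ∈ Set.Icc (0:ℝ) 1) (lam : ℝ) (hlam : IsHEig A lam) :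
    ∃ i : Fin n,
      ‖(lam : ℂ) - A i (fun _ => i)‖ - tS A i i ≤
        γ * tP A i + (1 - γ) * tQ A i :=
  stmt14_general hk A γ hγ lam hlam
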